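/- arXiv:0802.1293 — 2 statements merged into one kernel-verified Lean document; each statement's English description precedes it below -/
import Mathlib

section
/- Let A_1, A_2, … be a quasifibonacci sequence of level N, let k ≥ 1, let n satisfy A_k ≤ n < A_{k+1}, and set n' = A_1 + A_2 + ⋯ + A_k − n. Then the map φ sending a = (a_1, …, a_k) (every a ∈ S_n vanishes beyond position k) to (1−a_1, 1−a_2, …, 1−a_k) is a bijection from S_n onto S_{n'}, and for all a, b ∈ S_n one has a ≥ b in P_n if and only if φ(b) ≥ φ(a) in P_{n'}; i.e., P_n and P_{n'} are dual posets. -/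
/-- `A` (with meaningful values at indices `≥ 1`) is a quasifibonacci sequence of level `N`:
the terms are positive, `A (k+N) = A (k+N-1) + ⋯ + A k` for all `k ≥ 1`, and
`A k > A (k-1) + ⋯ + A 1` for all `1 ≤ k ≤ N`. -/
def QuasiFib (N : ℕ) (A : ℕ → ℕ) : Prop :=
  (∀ i, 1 ≤ i → 0 < A i) ∧
  (∀ k, 1 ≤ k → A (k + N) = ∑ i ∈ Finset.Icc k (k + N - 1), A i) ∧
  (∀ k, 1 ≤ k → k ≤ N → (∑ i ∈ Finset.Icc 1 (k - 1), A i) < A k)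

/-- `SRep A n` is the set of partitions of `n` into distinct terms of `A`, encoded as the
finite sets `F` of positive indices with `∑_{i ∈ F} A i = n` (i.e. the 0-1 indicator
sequences of the paper). -/
def SRep (A : ℕ → ℕ) (n : ℕ) : Set (Finset ℕ) :=
  {F | (∀ i ∈ F, 1 ≤ i) ∧ (∑ i ∈ F, A i) = n}

/-- the length `l(a)`: the largest index `i` with `a_i = 1` (and `0` for the empty set). -/
def len (F : Finset ℕ) : ℕ := F.sup id

/-- The directed edge relation of the digraph `G_n`: `(a,b)` is an edge iff there is a `k ≥ 1`
with `a_{k+N} = 1`, `a_k = ⋯ = a_{k+N-1} = 0`, `b_{k+N} = 0`, `b_k = ⋯ = b_{k+N-1} = 1`, and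
`a_t = b_t` for all `t ∉ {k, …, k+N}`. -/
def Edge (N : ℕ) (F G : Finset ℕ) : Prop :=
  ∃ k, 1 ≤ k ∧ (k + N) ∈ F ∧ (∀ i ∈ Finset.Ico k (k + N), i ∉ F) ∧
    (k + N) ∉ G ∧ (∀ i ∈ Finset.Ico k (k + N), i ∈ G) ∧
    (∀ t, t ∉ Finset.Icc k (k + N) → (t ∈ F ↔ t ∈ G))

/-- The partial order of the poset `P_n`: `a ≥ b` iff `b` is reachable from `a` by a
(possibly empty) directed path of edges. -/
def pge (N : ℕ) : Finset ℕ → Finset ℕ → Prop := Relation.ReflTransGen (Edge N)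

/-- `A_{k,0} = A_k + Σ_{1 ≤ i < k-N-1, N∤i} A_{k-N-1-i}`. -/
def Ak0 (N : ℕ) (A : ℕ → ℕ) (k : ℕ) : ℕ :=
  A k + ∑ i ∈ (Finset.Ico 1 (k - N - 1)).filter (fun i => ¬ N ∣ i), A (k - N - 1 - i)

/-- `A_{k,1} = A_k + Σ_{1 ≤ i < k-N, N∤i} A_{k-N-i}`. -/
def Ak1 (N : ℕ) (A : ℕ → ℕ) (k : ℕ) : ℕ :=
  A k + ∑ i ∈ (Finset.Ico 1 (k - N)).filter (fun i => ¬ N ∣ i), A (k - N - i)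

/-- `A_{k,2} = A_k + Σ_{1 ≤ i < k-N+1, N∤i} A_{k-N+1-i}`. -/
def Ak2 (N : ℕ) (A : ℕ → ℕ) (k : ℕ) : ℕ :=
  A k + ∑ i ∈ (Finset.Ico 1 (k - N + 1)).filter (fun i => ¬ N ∣ i), A (k - N + 1 - i)

/-- ℤ-indexed version of `SRep` (empty for negative `m`). -/
def SRepZ (A : ℕ → ℕ) (m : ℤ) : Set (Finset ℕ) :=
  {F | (∀ i ∈ F, 1 ≤ i) ∧ (∑ i ∈ F, (A i : ℤ)) = m}

section AuxStmt10

lemma qf_succ_lt (N : ℕ) (hN : 2 ≤ N) (A : ℕ → ℕ) (hA : QuasiFib N A) :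
    ∀ i, 1 ≤ i → A i < A (i + 1) := by
  obtain ⟨hpos, hrec, hinit⟩ := hA
  intro i hi
  rcases le_or_gt (i + 1) N with h | h
  · have h3 := hinit (i+1) (by omega) h
    simp only [Nat.add_sub_cancel] at h3
    calc A i ≤ ∑ j ∈ Finset.Icc 1 i, A j :=
          Finset.single_le_sum (fun j _ => Nat.zero_le _) (Finset.mem_Icc.mpr ⟨hi, le_refl i⟩)
      _ < A (i+1) := h3
  · have hk : 1 ≤ i + 1 - N := by omega
    have hrec' := hrec (i + 1 - N) hk
    have he : i + 1 - N + N = i + 1 := by omega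
    rw [he] at hrec'
    simp only [Nat.add_sub_cancel] at hrec'
    rw [hrec']
    exact Finset.single_lt_sum (by omega : i + 1 - N ≠ i)
      (Finset.mem_Icc.mpr ⟨by omega, le_refl i⟩)
      (Finset.mem_Icc.mpr ⟨le_refl _, by omega⟩) (hpos _ hk)
      (fun j _ _ => Nat.zero_le _)

lemma qf_mono (N : ℕ) (hN : 2 ≤ N) (A : ℕ → ℕ) (hA : QuasiFib N A) :
    ∀ i j, 1 ≤ i → i ≤ j → A i ≤ A j := by
  intro i j hi hij
  induction j, hij using Nat.le_induction with
  | base => exact le_refl _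
  | succ m hm ih => exact ih.trans (qf_succ_lt N hN A hA m (hi.trans hm)).le

/-- `A m > A 1 + ⋯ + A (m - N)` for all `m ≥ 1`. -/
lemma qf_gt_sum (N : ℕ) (hN : 2 ≤ N) (A : ℕ → ℕ) (hA : QuasiFib N A) :
    ∀ m, 1 ≤ m → (∑ i ∈ Finset.Icc 1 (m - N), A i) < A m := by
  obtain ⟨hpos, hrec, hinit⟩ := hA
  intro m
  induction m using Nat.strong_induction_on with
  | _ m ih =>
    intro hm
    rcases le_or_gt m N with h | h
    · have h0 : m - N = 0 := by omega
      rw [h0]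
      simpa using hpos m hm
    · set j := m - N with hj
      have hj1 : 1 ≤ j := by omega
      have hrec' := hrec j hj1
      have he : j + N = m := by omega
      rw [he] at hrec'
      rw [hrec']
      have lhs : ∑ i ∈ Finset.Icc 1 j, A i
          = ∑ i ∈ Finset.Icc 1 (j-1), A i + A j := by
        have h' := Finset.sum_Icc_succ_top (a := 1) (b := j - 1) (by omega) A
        rwa [show j - 1 + 1 = j by omega] at h'
      have rhs : ∑ i ∈ Finset.Icc j (m-1), A i
          = A j + ∑ i ∈ Finset.Ioc j (m-1), A i := by
        rw [← Finset.Ioc_insert_left (by omega : j ≤ m - 1),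
          Finset.sum_insert (by simp)]
      rw [lhs, rhs]
      have h1 : ∑ i ∈ Finset.Icc 1 (j-1), A i < A (m-1) := by
        have := ih (m-1) (by omega) (by omega)
        rwa [show m - 1 - N = j - 1 by omega] at this
      have h2 : A (m-1) ≤ ∑ i ∈ Finset.Ioc j (m-1), A i :=
        Finset.single_le_sum (fun i _ => Nat.zero_le _)
          (Finset.mem_Ioc.mpr ⟨by omega, le_refl _⟩)
      omega

/-- `A (k+1) > A 1 + ⋯ + A (k-1)`. -/
lemma qf_succ_gt (N : ℕ) (hN : 2 ≤ N) (A : ℕ → ℕ) (hA : QuasiFib N A)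
    (k : ℕ) (hk : 1 ≤ k) : (∑ i ∈ Finset.Icc 1 (k-1), A i) < A (k + 1) := by
  obtain ⟨hpos, hrec, hinit⟩ := hA
  rcases le_or_gt (k + 1) N with h | h
  · have h3 := hinit (k+1) (by omega) h
    simp only [Nat.add_sub_cancel] at h3
    refine lt_of_le_of_lt ?_ h3
    exact Finset.sum_le_sum_of_subset (Finset.Icc_subset_Icc_right (by omega))
  · have hj1 : 1 ≤ k + 1 - N := by omega
    have hrec' := hrec (k + 1 - N) hj1
    rw [show k + 1 - N + N = k + 1 by omega] at hrec'
    simp only [Nat.add_sub_cancel] at hrec'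
    rw [hrec']
    have rhs : ∑ i ∈ Finset.Icc (k+1-N) k, A i
        = ∑ i ∈ Finset.Icc (k+1-N) (k-1), A i + A k := by
      have h' := Finset.sum_Icc_succ_top (a := k+1-N) (b := k - 1) (by omega) A
      rwa [show k - 1 + 1 = k by omega] at h'
    have lhs : ∑ i ∈ Finset.Icc 1 (k-1), A i
        = ∑ i ∈ Finset.Icc 1 (k-N), A i + ∑ i ∈ Finset.Icc (k+1-N) (k-1), A i := by
      rw [show Finset.Icc 1 (k-1) = Finset.Ioc 0 (k-1) from rfl,
        show Finset.Icc 1 (k-N) = Finset.Ioc 0 (k-N) from rfl,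
        show Finset.Icc (k+1-N) (k-1) = Finset.Ioc (k-N) (k-1) from by
            ext t; simp only [Finset.mem_Icc, Finset.mem_Ioc]; omega,
        Finset.sum_Ioc_consecutive _ (by omega) (by omega)]
    have h1 : ∑ i ∈ Finset.Icc 1 (k-N), A i < A k :=
      qf_gt_sum N hN A ⟨hpos, hrec, hinit⟩ k hk
    omega

lemma edge_subset_aux (N k : ℕ) {F G : Finset ℕ} (hF : F ⊆ Finset.Icc 1 k)
    (hE : Edge N F G) : G ⊆ Finset.Icc 1 k := by
  obtain ⟨j, hj1, hjF, hIcoF, hjG, hIcoG, hout⟩ := hE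
  intro t ht
  by_cases hcase : t ∈ Finset.Icc j (j + N)
  · have hjk := hF hjF
    simp only [Finset.mem_Icc] at hjk hcase ⊢
    omega
  · exact hF ((hout t hcase).mpr ht)

lemma edge_compl_aux (N k : ℕ) {F G : Finset ℕ} (hF : F ⊆ Finset.Icc 1 k)
    (hE : Edge N F G) :
    Edge N (Finset.Icc 1 k \ G) (Finset.Icc 1 k \ F) := by
  obtain ⟨j, hj1, hjF, hIcoF, hjG, hIcoG, hout⟩ := hE
  have hjk : j + N ≤ k := (Finset.mem_Icc.mp (hF hjF)).2
  refine ⟨j, hj1, ?_, ?_, ?_, ?_, ?_⟩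
  · exact Finset.mem_sdiff.mpr ⟨Finset.mem_Icc.mpr ⟨by omega, hjk⟩, hjG⟩
  · intro i hi hmem
    exact (Finset.mem_sdiff.mp hmem).2 (hIcoG i hi)
  · intro hmem
    exact (Finset.mem_sdiff.mp hmem).2 hjF
  · intro i hi
    have := Finset.mem_Ico.mp hi
    exact Finset.mem_sdiff.mpr ⟨Finset.mem_Icc.mpr ⟨by omega, by omega⟩, hIcoF i hi⟩
  · intro t ht
    simp only [Finset.mem_sdiff]
    rw [hout t ht]

lemma pge_compl_aux (N k : ℕ) {a b : Finset ℕ} (ha : a ⊆ Finset.Icc 1 k)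
    (h : pge N a b) :
    b ⊆ Finset.Icc 1 k ∧ pge N (Finset.Icc 1 k \ b) (Finset.Icc 1 k \ a) := by
  induction h with
  | refl => exact ⟨ha, Relation.ReflTransGen.refl⟩
  | tail hab hedge ih =>
    obtain ⟨hc, hp⟩ := ih
    exact ⟨edge_subset_aux N k hc hedge,
      Relation.ReflTransGen.head (edge_compl_aux N k hc hedge) hp⟩

end AuxStmt10


/-- Proposition 4.1: for `A_k ≤ n < A_{k+1}` and `n' = A_1 + ⋯ + A_k - n`, every `a ∈ S_n`
vanishes beyond position `k`, and complementation `φ(a) = (1-a_1, …, 1-a_k)` is a bijection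
from `S_n` onto `S_{n'}` reversing the order: `a ≥ b` in `P_n` iff `φ(b) ≥ φ(a)` in `P_{n'}`.
So `P_n` and `P_{n'}` are dual posets. -/
theorem stmt_10 (N : ℕ) (hN : 2 ≤ N) (A : ℕ → ℕ) (hA : QuasiFib N A)
    (k n : ℕ) (hk : 1 ≤ k) (h1 : A k ≤ n) (h2 : n < A (k + 1)) :
    (∀ F ∈ SRep A n, F ⊆ Finset.Icc 1 k) ∧
    Set.BijOn (fun F => Finset.Icc 1 k \ F) (SRep A n)
      (SRepZ A ((∑ i ∈ Finset.Icc 1 k, (A i : ℤ)) - n)) ∧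
    (∀ a ∈ SRep A n, ∀ b ∈ SRep A n,
      (pge N a b ↔ pge N (Finset.Icc 1 k \ b) (Finset.Icc 1 k \ a))) := by
  have hsub : ∀ F ∈ SRep A n, F ⊆ Finset.Icc 1 k := by
    intro F hF i hi
    obtain ⟨hpos', hsum⟩ := hF
    refine Finset.mem_Icc.mpr ⟨hpos' i hi, ?_⟩
    by_contra hik
    push_neg at hik
    have hm : A (k+1) ≤ A i := qf_mono N hN A hA (k+1) i (by omega) (by omega)
    have hle : A i ≤ ∑ j ∈ F, A j :=
      Finset.single_le_sum (fun j _ => Nat.zero_le _) hi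
    omega
  have hS : (∑ i ∈ Finset.Icc 1 k, (A i : ℤ))
      = (∑ i ∈ Finset.Icc 1 (k-1), (A i : ℤ)) + A k := by
    rw [show Finset.Icc 1 k = Finset.Ioc 0 k from rfl,
      show Finset.Icc 1 (k-1) = Finset.Ioc 0 (k-1) from rfl,
      show k = (k-1) + 1 by omega]
    exact Finset.sum_Ioc_succ_top (by omega) _
  refine ⟨hsub, ⟨?_, ?_, ?_⟩, ?_⟩
  · -- MapsTo
    intro F hF
    obtain ⟨hpos', hsum⟩ := hF
    constructor
    · intro i hi
      exact (Finset.mem_Icc.mp ((Finset.mem_sdiff.mp hi).1)).1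
    · have hsd := Finset.sum_sdiff (f := fun i => (A i : ℤ)) (hsub F ⟨hpos', hsum⟩)
      have hF' : (∑ i ∈ F, (A i : ℤ)) = (n : ℤ) := by exact_mod_cast hsum
      rw [hF'] at hsd
      linarith
  · -- InjOn
    intro F1 hF1 F2 hF2 heq
    simp only at heq
    rw [← Finset.sdiff_sdiff_eq_self (hsub F1 hF1),
      ← Finset.sdiff_sdiff_eq_self (hsub F2 hF2), heq]
  · -- SurjOn
    intro G hG
    obtain ⟨hGpos, hGsum⟩ := hG
    have hGsub : G ⊆ Finset.Icc 1 k := by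
      intro i hi
      refine Finset.mem_Icc.mpr ⟨hGpos i hi, ?_⟩
      by_contra hik
      push_neg at hik
      have hle : (A i : ℤ) ≤ ∑ j ∈ G, (A j : ℤ) :=
        Finset.single_le_sum (f := fun j => (A j : ℤ)) (fun j _ => Int.natCast_nonneg _) hi
      have h4 : (A (k+1) : ℤ) ≤ (A i : ℤ) := by
        exact_mod_cast qf_mono N hN A hA (k+1) i (by omega) hik
      have h5 : (∑ j ∈ Finset.Icc 1 (k-1), (A j : ℤ)) < (A (k+1) : ℤ) := by
        exact_mod_cast qf_succ_gt N hN A hA k hk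
      have h6 : (A k : ℤ) ≤ (n : ℤ) := by exact_mod_cast h1
      rw [hGsum] at hle
      linarith
    have hz : (∑ i ∈ Finset.Icc 1 k \ G, (A i : ℤ)) = (n : ℤ) := by
      have hsd := Finset.sum_sdiff (f := fun i => (A i : ℤ)) hGsub
      rw [hGsum] at hsd
      linarith
    refine ⟨Finset.Icc 1 k \ G, ⟨?_, ?_⟩, ?_⟩
    · intro i hi
      exact (Finset.mem_Icc.mp ((Finset.mem_sdiff.mp hi).1)).1
    · exact_mod_cast hz
    · show Finset.Icc 1 k \ (Finset.Icc 1 k \ G) = G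
      exact Finset.sdiff_sdiff_eq_self hGsub
  · -- order duality
    intro a ha b hb
    have ha' := hsub a ha
    have hb' := hsub b hb
    constructor
    · intro h
      exact (pge_compl_aux N k ha' h).2
    · intro h
      have hp := (pge_compl_aux N k Finset.sdiff_subset h).2
      rwa [Finset.sdiff_sdiff_eq_self ha', Finset.sdiff_sdiff_eq_self hb'] at hp
end

section
/- Let A_1, A_2, … be a quasifibonacci sequence of level N, let k ≥ N+1, and let n satisfy A_{k,1} < n ≤ A_{k,2}. Then: (i) the map a ↦ a − τ_k is a bijection from T_n = {a ∈ S_n : l(a) = k} onto S_{n−A_k} preserving the edge relation in both directions; (ii) every a ∈ R_n = {a ∈ S_n : l(a) = k−1} satisfies a_{k−N} = a_{k−N+1} = ⋯ = a_{k−1} = 1, and the map a ↦ a − η_k is a bijection from R_n onto {b ∈ S_{n−A_k} : l(b) ≤ k−N−1} preserving the edge relation in both directions. -/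
open Finset

theorem sum_Ico_one_reflect {M : Type*} [AddCommMonoid M] (f : ℕ → M) (m : ℕ) :
    ∑ i ∈ Ico 1 m, f (m - i) = ∑ i ∈ Ico 1 m, f i := by
  simpa using sum_Ico_reflect f 1 (Nat.le_succ m)

namespace QuasiFib

variable {N : ℕ} {A : ℕ → ℕ}

theorem eq_sum_Icc (hA : QuasiFib N A) {k : ℕ} (hk : N + 1 ≤ k) :
    A k = ∑ i ∈ Icc (k - N) (k - 1), A i := by
  have h := hA.2.1 (k - N) (by omega)
  rwa [Nat.sub_add_cancel (by omega : N ≤ k)] at h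

theorem eq_sum_Ico (hA : QuasiFib N A) {k : ℕ} (hk : N + 1 ≤ k) :
    A k = ∑ i ∈ Ico (k - N) k, A i := by
  rw [hA.eq_sum_Icc hk, ← Ico_add_one_right_eq_Icc, Nat.sub_add_cancel (by omega : 1 ≤ k)]

theorem apply_sub_add_apply_pred_le (hN : 2 ≤ N) (hA : QuasiFib N A) {k : ℕ}
    (hk : N + 1 ≤ k) :
    A (k - N) + A (k - 1) ≤ A k := by
  rw [hA.eq_sum_Icc hk, ← sum_pair (by omega : k - N ≠ k - 1)]
  exact sum_le_sum_of_subset (by intro i; simp only [mem_insert, mem_singleton, mem_Icc]; omega)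

theorem apply_lt_apply_add_one (hN : 2 ≤ N) (hA : QuasiFib N A) {i : ℕ} (hi : 1 ≤ i) :
    A i < A (i + 1) := by
  rcases le_or_gt (i + 1) N with h | h
  · have hinit := hA.2.2 (i + 1) (by omega) h
    rw [Nat.add_sub_cancel] at hinit
    exact (single_le_sum (fun _ _ => Nat.zero_le _) (by simp; omega)).trans_lt hinit
  · have hrec := hA.apply_sub_add_apply_pred_le hN (k := i + 1) (by omega)
    rw [Nat.add_sub_cancel] at hrec
    have := hA.1 (i + 1 - N) (by omega)
    omega

theorem apply_le_apply (hN : 2 ≤ N) (hA : QuasiFib N A) {i j : ℕ} (hi : 1 ≤ i) (hij : i ≤ j) :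
    A i ≤ A j :=
  monotoneOn_nat_Ici_of_le_succ (fun _ hn => (hA.apply_lt_apply_add_one hN hn).le) hi
    (hi.trans hij) hij

theorem sum_Ico_one_eq (hA : QuasiFib N A) {m : ℕ} (hm : N + 1 ≤ m) :
    ∑ i ∈ Ico 1 m, A i = A m + ∑ i ∈ Ico 1 (m - N), A i := by
  rw [← sum_Ico_consecutive A (by omega : 1 ≤ m - N) (by omega : m - N ≤ m),
    ← hA.eq_sum_Ico hm, add_comm]

theorem sum_Ico_one_lt (hN : 2 ≤ N) (hA : QuasiFib N A) (m : ℕ) :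
    ∑ i ∈ Ico 1 m, A i < A (m + 1) := by
  induction m using Nat.strong_induction_on with
  | _ m ih =>
    rcases Nat.eq_zero_or_pos m with rfl | hm
    · simpa using hA.1 1 le_rfl
    rcases le_or_gt m N with h | h
    · have hinit := hA.2.2 m hm h
      rw [← Ico_add_one_right_eq_Icc, Nat.sub_one_add_one hm.ne'] at hinit
      exact hinit.trans (hA.apply_lt_apply_add_one hN hm)
    · rw [hA.sum_Ico_one_eq h]
      have := ih (m - N) (by omega)
      have := hA.apply_sub_add_apply_pred_le hN (k := m + 1) (by omega)
      rw [Nat.add_sub_cancel, show m + 1 - N = m - N + 1 by omega] at this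
      omega

theorem sum_filter_dvd_le (hN : 2 ≤ N) (hA : QuasiFib N A) (m : ℕ) :
    ∑ i ∈ (Ico 1 m).filter (N ∣ ·), A (m - i) ≤ A m := by
  rcases le_or_gt m N with h | h
  · rw [sum_eq_zero]
    · exact Nat.zero_le _
    intro i hi
    simp only [mem_filter, mem_Ico] at hi
    exact absurd (Nat.le_of_dvd (by omega) hi.2) (by omega)
  calc ∑ i ∈ (Ico 1 m).filter (N ∣ ·), A (m - i)
      ≤ ∑ i ∈ Ico N m, A (m - i) := by
        refine sum_le_sum_of_subset fun i hi => ?_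
        simp only [mem_filter, mem_Ico] at hi ⊢
        exact ⟨Nat.le_of_dvd (by omega) hi.2, hi.1.2⟩
    _ = ∑ i ∈ Ico 1 (m + 1 - N), A i := by simpa using sum_Ico_reflect A N (Nat.le_succ m)
    _ ≤ A (m + 1 - N + 1) := (hA.sum_Ico_one_lt hN _).le
    _ ≤ A m := hA.apply_le_apply hN (by omega) (by omega)

theorem Ak2_lt_two_mul (hN : 2 ≤ N) (hA : QuasiFib N A) {k : ℕ} (hk : N + 1 ≤ k) :
    Ak2 N A k < 2 * A k := by
  have hsum : ∑ i ∈ (Ico 1 (k - N + 1)).filter (¬ N ∣ ·), A (k - N + 1 - i) < A k :=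
    calc _ ≤ ∑ i ∈ Ico 1 (k - N + 1), A (k - N + 1 - i) :=
          sum_le_sum_of_subset (filter_subset _ _)
      _ = ∑ i ∈ Ico 1 (k - N + 1), A i := sum_Ico_one_reflect A _
      _ < A (k - N + 1 + 1) := hA.sum_Ico_one_lt hN _
      _ ≤ A k := hA.apply_le_apply hN (by omega) (by omega)
  unfold Ak2
  omega

theorem sum_Ico_one_le_Ak1_add (hN : 2 ≤ N) (hA : QuasiFib N A) {k : ℕ} (hk : N + 1 ≤ k) :
    ∑ i ∈ Ico 1 k, A i ≤ Ak1 N A k + A (k - N) := by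
  rw [hA.sum_Ico_one_eq hk, ← sum_Ico_one_reflect,
    ← sum_filter_add_sum_filter_not (Ico 1 (k - N)) (N ∣ ·)]
  have := hA.sum_filter_dvd_le hN (k - N)
  unfold Ak1
  omega

end QuasiFib

theorem le_len {F : Finset ℕ} {i : ℕ} (h : i ∈ F) : i ≤ len F :=
  le_sup (f := id) h

theorem len_le_iff {F : Finset ℕ} {m : ℕ} : len F ≤ m ↔ ∀ i ∈ F, i ≤ m :=
  Finset.sup_le_iff

theorem mem_of_len_eq {F : Finset ℕ} {k : ℕ} (hk : 1 ≤ k) (h : len F = k) : k ∈ F := by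
  rcases F.eq_empty_or_nonempty with rfl | hF
  · simp [len] at h; omega
  obtain ⟨i, hi, he⟩ := exists_mem_eq_sup F hF id
  rw [← h, len, he]
  exact hi

theorem len_Icc {p q : ℕ} (hpq : p ≤ q) : len (Icc p q) = q :=
  le_antisymm (len_le_iff.2 fun _ hi => (mem_Icc.1 hi).2) (le_len (right_mem_Icc.2 hpq))

theorem QuasiFib.lt_of_mem_SRep {N : ℕ} {A : ℕ → ℕ} (hN : 2 ≤ N) (hA : QuasiFib N A)
    {m k : ℕ} (hk : 1 ≤ k) (hm : m < A k) {G : Finset ℕ} (hG : G ∈ SRep A m) {i : ℕ}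
    (hi : i ∈ G) : i < k := by
  by_contra! hki
  have := hG.2
  have := single_le_sum (f := A) (fun _ _ => Nat.zero_le _) hi
  have := hA.apply_le_apply hN hk hki
  omega

theorem QuasiFib.Icc_subset_of_len_eq {N : ℕ} {A : ℕ → ℕ} (hN : 2 ≤ N) (hA : QuasiFib N A)
    {k n : ℕ} (hk : N + 1 ≤ k) (hn : Ak1 N A k < n) {F : Finset ℕ} (hF : F ∈ SRep A n)
    (hlen : len F = k - 1) : Icc (k - N) (k - 1) ⊆ F := by
  intro j hj
  by_contra hjF
  rw [mem_Icc] at hj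
  have hsub : F ⊆ (Ico 1 k).erase j := fun i hi => by
    have := hF.1 i hi
    have := le_len hi
    simp only [mem_erase, mem_Ico]
    exact ⟨fun h => hjF (h ▸ hi), by omega, by omega⟩
  have hsum := sum_le_sum_of_subset (f := A) hsub
  rw [hF.2] at hsum
  have := sum_erase_add (Ico 1 k) A (a := j) (by simp only [mem_Ico]; omega)
  have := hA.sum_Ico_one_le_Ak1_add hN hk
  have := hA.apply_le_apply hN (by omega : 1 ≤ k - N) hj.1
  omega

theorem bijOn_erase_SRep {A : ℕ → ℕ} {n k : ℕ} (hk : 1 ≤ k) (hn : A k ≤ n)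
    (hlt : ∀ G ∈ SRep A (n - A k), ∀ i ∈ G, i < k) :
    Set.BijOn (fun F => F.erase k) {F | F ∈ SRep A n ∧ len F = k} (SRep A (n - A k)) := by
  refine ⟨?_, ?_, ?_⟩
  · rintro F ⟨hF, hlen⟩
    dsimp only
    have := sum_erase_add F A (mem_of_len_eq hk hlen)
    exact ⟨fun i hi => hF.1 i (mem_of_mem_erase hi), by rw [← hF.2]; omega⟩
  · intro F₁ hF₁ F₂ hF₂ h
    rw [← insert_erase (mem_of_len_eq hk hF₁.2), ← insert_erase (mem_of_len_eq hk hF₂.2)]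
    exact congrArg (insert k) h
  · intro G hG
    have hkG : k ∉ G := fun h => (hlt G hG k h).false
    refine ⟨insert k G, ⟨⟨?_, ?_⟩, ?_⟩, erase_insert hkG⟩
    · simpa [hk] using hG.1
    · rw [sum_insert hkG, hG.2]; omega
    · refine le_antisymm (len_le_iff.2 fun i hi => ?_) (le_len (mem_insert_self k G))
      rcases mem_insert.1 hi with rfl | hi
      exacts [le_rfl, (hlt G hG i hi).le]

theorem bijOn_sdiff_Icc_SRep {A : ℕ → ℕ} {n p q : ℕ} (hp : 1 ≤ p) (hpq : p ≤ q)
    (hn : ∑ i ∈ Icc p q, A i ≤ n)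
    (hsub : ∀ F ∈ SRep A n, len F = q → Icc p q ⊆ F) :
    Set.BijOn (fun F => F \ Icc p q) {F | F ∈ SRep A n ∧ len F = q}
      {G | G ∈ SRep A (n - ∑ i ∈ Icc p q, A i) ∧ len G ≤ p - 1} := by
  refine ⟨?_, ?_, ?_⟩
  · rintro F ⟨hF, hlen⟩
    dsimp only
    have := sum_sdiff (f := A) (hsub F hF hlen)
    refine ⟨⟨fun i hi => hF.1 i (mem_sdiff.1 hi).1, by rw [← hF.2]; omega⟩,
      len_le_iff.2 fun i hi => ?_⟩
    obtain ⟨hiF, hiI⟩ := mem_sdiff.1 hi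
    have := le_len hiF
    rw [mem_Icc] at hiI
    omega
  · intro F₁ hF₁ F₂ hF₂ h
    rw [← sdiff_union_of_subset (hsub F₁ hF₁.1 hF₁.2),
      ← sdiff_union_of_subset (hsub F₂ hF₂.1 hF₂.2)]
    exact congrArg (· ∪ Icc p q) h
  · rintro G ⟨hG, hlen⟩
    have hdisj : Disjoint G (Icc p q) := disjoint_left.2 fun i hi hiI => by
      have := (len_le_iff.1 hlen) i hi
      rw [mem_Icc] at hiI
      omega
    refine ⟨G ∪ Icc p q, ⟨⟨?_, ?_⟩, ?_⟩, ?_⟩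
    · intro i hi
      rcases mem_union.1 hi with hi | hi
      exacts [hG.1 i hi, hp.trans (mem_Icc.1 hi).1]
    · rw [sum_union hdisj, hG.2]; omega
    · rw [len, sup_union, ← len, ← len, len_Icc hpq]
      exact max_eq_right (by omega)
    · simp only [union_sdiff_right, sdiff_eq_self_of_disjoint hdisj]

theorem edge_sdiff_iff {N : ℕ} {s a b : Finset ℕ} (ha : s ⊆ a) (hb : s ⊆ b) :
    Edge N a b ↔ Edge N (a \ s) (b \ s) := by
  constructor
  · rintro ⟨j, hj, hja, hwa, hjb, hwb, hout⟩
    refine ⟨j, hj, mem_sdiff.2 ⟨hja, fun h => hjb (hb h)⟩,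
      fun i hi h => hwa i hi (mem_sdiff.1 h).1, fun h => hjb (mem_sdiff.1 h).1,
      fun i hi => mem_sdiff.2 ⟨hwb i hi, fun h => hwa i hi (ha h)⟩, fun t ht => ?_⟩
    simp only [mem_sdiff, hout t ht]
  · rintro ⟨j, hj, hja, hwa, hjb, hwb, hout⟩
    refine ⟨j, hj, (mem_sdiff.1 hja).1,
      fun i hi h => hwa i hi (mem_sdiff.2 ⟨h, (mem_sdiff.1 (hwb i hi)).2⟩),
      fun h => hjb (mem_sdiff.2 ⟨h, (mem_sdiff.1 hja).2⟩),
      fun i hi => (mem_sdiff.1 (hwb i hi)).1, fun t ht => ?_⟩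
    by_cases hts : t ∈ s
    · exact iff_of_true (ha hts) (hb hts)
    · simpa only [mem_sdiff, hts, not_false_eq_true, and_true] using hout t ht

theorem edge_erase_iff {N k : ℕ} {a b : Finset ℕ} (ha : k ∈ a) (hb : k ∈ b) :
    Edge N a b ↔ Edge N (a.erase k) (b.erase k) := by
  rw [erase_eq, erase_eq]
  exact edge_sdiff_iff (singleton_subset_iff.2 ha) (singleton_subset_iff.2 hb)

/-- Proposition 4.4: for `k ≥ N+1` and `A_{k,1} < n ≤ A_{k,2}`:
(i) `a ↦ a - τ_k` is a bijection from `T_n = {a ∈ S_n : l(a) = k}` onto `S_{n-A_k}`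
preserving the edge relation in both directions;
(ii) every `a ∈ R_n = {a ∈ S_n : l(a) = k-1}` satisfies `a_{k-N} = ⋯ = a_{k-1} = 1`, and
`a ↦ a - η_k` is a bijection from `R_n` onto `{b ∈ S_{n-A_k} : l(b) ≤ k-N-1}` preserving
the edge relation in both directions. -/
theorem stmt_13 (N : ℕ) (hN : 2 ≤ N) (A : ℕ → ℕ) (hA : QuasiFib N A)
    (k n : ℕ) (hk : N + 1 ≤ k) (h1 : Ak1 N A k < n) (h2 : n ≤ Ak2 N A k) :
    (Set.BijOn (fun F => F.erase k) {F | F ∈ SRep A n ∧ len F = k} (SRep A (n - A k)) ∧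
      (∀ a, a ∈ SRep A n → len a = k → ∀ b, b ∈ SRep A n → len b = k →
        (Edge N a b ↔ Edge N (a.erase k) (b.erase k)))) ∧
    ((∀ a, a ∈ SRep A n → len a = k - 1 → Finset.Icc (k - N) (k - 1) ⊆ a) ∧
      Set.BijOn (fun F => F \ Finset.Icc (k - N) (k - 1))
        {F | F ∈ SRep A n ∧ len F = k - 1}
        {G | G ∈ SRep A (n - A k) ∧ len G ≤ k - N - 1} ∧
      (∀ a, a ∈ SRep A n → len a = k - 1 → ∀ b, b ∈ SRep A n → len b = k - 1 →
        (Edge N a b ↔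
          Edge N (a \ Finset.Icc (k - N) (k - 1)) (b \ Finset.Icc (k - N) (k - 1))))) := by
  have hAk : A k ≤ n := by unfold Ak1 at h1; omega
  have hrest : n - A k < A k := by have := hA.Ak2_lt_two_mul hN hk; omega
  have hblock := fun a (ha : a ∈ SRep A n) hla => hA.Icc_subset_of_len_eq hN hk h1 ha hla
  refine ⟨⟨bijOn_erase_SRep (by omega) hAk fun G hG i hi =>
      hA.lt_of_mem_SRep hN (by omega) hrest hG hi, ?_⟩, hblock, ?_, ?_⟩
  · exact fun a _ hla b _ hlb => edge_erase_iff (mem_of_len_eq (by omega) hla)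
      (mem_of_len_eq (by omega) hlb)
  · rw [hA.eq_sum_Icc hk] at hAk ⊢
    exact bijOn_sdiff_Icc_SRep (by omega) (by omega) hAk hblock
  · exact fun a ha hla b hb hlb => edge_sdiff_iff (hblock a ha hla) (hblock b hb hlb)
end
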